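/- Let G₁(x,y) = (−(1/4)·x³/y⁴ + (5/12)·x²/y³ − (1/6)·x/y², (1/8)·x²/y³ − (5/24)·x/y² + (1/12)·(1/y)). For x > 0 and y > 0, one has G₁(x,y) = (0,0) if and only if x = y or x = (2/3)·y. In particular, the points (√(c(1)), √(c(1))) with c(1) = (2π²)^{−2/3} and ((2/3)·√(c(2/3)), √(c(2/3))) with c(2/3) = (4π²/3)^{−2/3} are equilibria; the latter corresponds to a critical point of the volume-normalized spinor flow on S³ which is not a Killing spinor. -/

import Mathlib

/-!
Both components of `G₁` are multiples of `(x - y)(3x - 2y) / (24 y³)`, the first one with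
the factor `-2x/y`. Hence `G₁` vanishes exactly where this quadratic factor does, i.e. on the
lines `x = y` and `x = (2/3) y`.
-/

open Real Filter Set Topology
open scoped ENNReal

/-- The vector field of the volume-normalized spinor-flow system on Berger spheres
in the case `aμ = 1`. -/
noncomputable def G1 (x y : ℝ) : ℝ × ℝ :=
  (-(1/4) * x^3 / y^4 + (5/12) * x^2 / y^3 - (1/6) * x / y^2,
   (1/8) * x^2 / y^3 - (5/24) * x / y^2 + (1/12) * (1/y))

-- At `y = 0` both sides are `(0, 0)` because division by zero gives `0`.
lemma G1_eq (x y : ℝ) :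
    G1 x y = (-(2 * x / y) * ((x - y) * (3 * x - 2 * y) / (24 * y ^ 3)),
      (x - y) * (3 * x - 2 * y) / (24 * y ^ 3)) := by
  rcases eq_or_ne y 0 with rfl | hy
  · simp [G1]
  · simp only [G1, Prod.mk.injEq]
    constructor <;> field_simp <;> ring

lemma G1_eq_zero_iff {x y : ℝ} (hy : y ≠ 0) :
    G1 x y = (0, 0) ↔ x = y ∨ x = (2/3) * y := by
  have hfactor : (x - y) * (3 * x - 2 * y) = 0 ↔ x = y ∨ x = (2/3) * y := by
    rw [mul_eq_zero, sub_eq_zero]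
    exact or_congr Iff.rfl (by constructor <;> intro h <;> linarith)
  rw [← hfactor, G1_eq, Prod.mk.injEq]
  constructor
  · rintro ⟨-, h⟩
    simpa [hy] using h
  · intro h
    simp [h]

lemma G1_self (y : ℝ) : G1 y y = (0, 0) := by
  simp [G1_eq]

lemma G1_two_thirds_mul_self (y : ℝ) : G1 ((2/3) * y) y = (0, 0) := by
  have hfactor : ((2/3) * y - y) * (3 * ((2/3) * y) - 2 * y) = 0 := by ring
  simp [G1_eq, hfactor]

/-- For `x, y > 0`, `G₁(x,y) = 0` iff `x = y` or `x = (2/3)y`. In particular the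
volume-normalized round metric `(√c(1), √c(1))` with `c(1) = (2π²)^(-2/3)` and the
point `((2/3)√c(2/3), √c(2/3))` with `c(2/3) = (4π²/3)^(-2/3)` are equilibria (the
latter being a critical point of the normalized spinor flow which is not a Killing
spinor). -/
theorem G1_equilibria :
    (∀ x y : ℝ, 0 < x → 0 < y → (G1 x y = (0, 0) ↔ x = y ∨ x = (2/3) * y)) ∧
    G1 (Real.sqrt ((2 * π^2) ^ (-(2:ℝ)/3))) (Real.sqrt ((2 * π^2) ^ (-(2:ℝ)/3))) = (0, 0) ∧
    G1 ((2/3) * Real.sqrt ((4 * π^2 / 3) ^ (-(2:ℝ)/3)))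
        (Real.sqrt ((4 * π^2 / 3) ^ (-(2:ℝ)/3))) = (0, 0) :=
  ⟨fun _ _ _ hy => G1_eq_zero_iff hy.ne', G1_self _, G1_two_thirds_mul_self _⟩
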